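/- arXiv:1408.6168 — 3 statements merged into one kernel-verified Lean document; each statement's English description precedes it below -/
import Mathlib

section
/- Let {K_w}_{w>0} be a Fejér-type kernel, K_w(t) = w^N K(t^w), and let α > 0 be such that m(K,α) < +∞. Then for every δ ∈ (0,1), ∫_{|1−t|>δ} |K_w(t)| ⟨t⟩^{−1} dt = O(w^{−α}) as w → +∞; i.e., there exist C > 0 and w_0 > 0 such that ∫_{|1−t|>δ} |K_w(t)| ⟨t⟩^{−1} dt ≤ C w^{−α} for all w ≥ w_0. -/
open MeasureTheory Filter Set Asymptotics
open scoped ENNReal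

noncomputable section

/-- The class `Φ`: `φ : [0,∞) → [0,∞)` convex, vanishing exactly at `0`,
with `φ(u)/u → 0` as `u → 0⁺`. -/
def IsPhiFun (φ : ℝ → ℝ) : Prop :=
  ConvexOn ℝ (Set.Ici 0) φ ∧ (∀ u, 0 ≤ u → 0 ≤ φ u) ∧
  (∀ u, 0 ≤ u → (φ u = 0 ↔ u = 0)) ∧
  Tendsto (fun u => φ u / u) (nhdsWithin 0 (Set.Ioi 0)) (nhds 0)

/-- The positive orthant `ℝ^N_+ = (0,∞)^N`. -/
def RPos (N : ℕ) : Set (Fin N → ℝ) := {x | ∀ i, 0 < x i}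

/-- `⟨t⟩ := ∏ᵢ tᵢ`. -/
def prodCoord {N : ℕ} (t : Fin N → ℝ) : ℝ := ∏ i, t i

/-- Euclidean distance `|1 - t|`. -/
def distOne {N : ℕ} (t : Fin N → ℝ) : ℝ := Real.sqrt (∑ i, (1 - t i) ^ 2)

/-- Euclidean norm `|log t|` of `log t := (log t₁, …, log t_N)`. -/
def logNorm {N : ℕ} (t : Fin N → ℝ) : ℝ := Real.sqrt (∑ i, Real.log (t i) ^ 2)

/-- `t^w := (t₁^w, …, t_N^w)`. -/
def powVec {N : ℕ} (t : Fin N → ℝ) (w : ℝ) : Fin N → ℝ := fun i => t i ^ w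

/-- The (Musielak–Orlicz) `φ`-variation of `g` on `[a,b]`:
`sup_D ∑ᵢ φ(|g(sᵢ) - g(sᵢ₋₁)|)` over all partitions `D` of `[a,b]`. -/
def phiVar1 (φ : ℝ → ℝ) (a b : ℝ) (g : ℝ → ℝ) : ℝ≥0∞ :=
  ⨆ (n : ℕ) (u : Fin (n + 1) → ℝ) (_ : Monotone u) (_ : u 0 = a) (_ : u (Fin.last n) = b),
    ∑ i : Fin n, ENNReal.ofReal (φ |g (u i.succ) - g (u i.castSucc)|)

/-- The point of `ℝ^N` obtained from `x'` (coordinates `≠ j`) by inserting `s`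
at the `j`-th coordinate. -/
def insertCoord {N : ℕ} (j : Fin N) (x' : {i : Fin N // i ≠ j} → ℝ) (s : ℝ) :
    Fin N → ℝ :=
  fun i => if h : i = j then s else x' ⟨i, h⟩

/-- `Φ^φ_j(f, I)`: the integral over `I'_j` (with weight `⟨x'_j⟩⁻¹`) of the `φ`-variations
of the `j`-th sections of `f`, where `I = ∏ᵢ [aᵢ, bᵢ]`. -/
def secVar {N : ℕ} (φ : ℝ → ℝ) (f : (Fin N → ℝ) → ℝ) (a b : Fin N → ℝ) (j : Fin N) :
    ℝ≥0∞ :=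
  ∫⁻ x' in Set.pi Set.univ (fun i : {i : Fin N // i ≠ j} => Set.Icc (a i.1) (b i.1)),
    phiVar1 φ (a j) (b j) (fun s => f (insertCoord j x' s)) *
      ENNReal.ofReal ((∏ i : {i : Fin N // i ≠ j}, x' i)⁻¹)

/-- `Φ^φ(f, I) := (∑_j Φ^φ_j(f,I)²)^{1/2}`. -/
def boxPhi {N : ℕ} (φ : ℝ → ℝ) (f : (Fin N → ℝ) → ℝ) (a b : Fin N → ℝ) : ℝ≥0∞ :=
  (∑ j : Fin N, secVar φ f a b j ^ 2) ^ ((1 : ℝ) / 2)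

/-- `{J_1, …, J_m}`, with `J_k = ∏ᵢ [c k i, d k i]`, is a partition of `I = ∏ᵢ [aᵢ, bᵢ]`
into non-overlapping `N`-dimensional intervals covering `I`. -/
def IsBoxPartition {N : ℕ} (a b : Fin N → ℝ) {m : ℕ} (c d : Fin m → Fin N → ℝ) : Prop :=
  (∀ k i, c k i ≤ d k i) ∧
  (⋃ k, Set.pi Set.univ fun i => Set.Icc (c k i) (d k i)) =
    Set.pi Set.univ (fun i => Set.Icc (a i) (b i)) ∧
  Pairwise fun k l =>
    Disjoint (Set.pi Set.univ fun i => Set.Ioo (c k i) (d k i))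
      (Set.pi Set.univ fun i => Set.Ioo (c l i) (d l i))

/-- The multidimensional (Tonelli-type) `φ`-variation `V^φ_I[f]` of `f` on
`I = ∏ᵢ [aᵢ, bᵢ]`: the sup of `∑ₖ Φ^φ(f, J_k)` over all partitions of `I` into
`N`-dimensional intervals. -/
def varOn {N : ℕ} (φ : ℝ → ℝ) (f : (Fin N → ℝ) → ℝ) (a b : Fin N → ℝ) : ℝ≥0∞ :=
  ⨆ (m : ℕ) (c : Fin m → Fin N → ℝ) (d : Fin m → Fin N → ℝ) (_ : IsBoxPartition a b c d),
    ∑ k, boxPhi φ f (c k) (d k)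

/-- `V^φ[f]`, the `φ`-variation of `f` over the whole `ℝ^N_+`: the sup of `V^φ_I[f]`
over all intervals `I ⊂ ℝ^N_+`. -/
def totalVar {N : ℕ} (φ : ℝ → ℝ) (f : (Fin N → ℝ) → ℝ) : ℝ≥0∞ :=
  ⨆ (a : Fin N → ℝ) (b : Fin N → ℝ) (_ : ∀ i, 0 < a i) (_ : ∀ i, a i ≤ b i),
    varOn φ f a b

/-- `f ∈ BV^φ(ℝ^N_+)`: `f` measurable with `V^φ[λ f] < ∞` for some `λ > 0`. -/
def MemBVphi {N : ℕ} (φ : ℝ → ℝ) (f : (Fin N → ℝ) → ℝ) : Prop :=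
  Measurable f ∧ ∃ l > (0 : ℝ), totalVar φ (fun x => l * f x) < ⊤

/-- The Mellin-type operator `(T f)(s) := ∫_{ℝ^N_+} K(t) f(st) ⟨t⟩⁻¹ dt`. -/
def mellinOp {N : ℕ} (K : (Fin N → ℝ) → ℝ) (f : (Fin N → ℝ) → ℝ) (s : Fin N → ℝ) : ℝ :=
  ∫ t in RPos N, K t * f (s * t) * (prodCoord t)⁻¹

/-- `f` belongs to the domain of the operators `T_w`: the defining integrals exist
finitely for every `s ∈ ℝ^N_+` and `w > 0`. -/
def InDomain {N : ℕ} (K : ℝ → (Fin N → ℝ) → ℝ) (f : (Fin N → ℝ) → ℝ) : Prop :=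
  ∀ w > (0 : ℝ), ∀ s ∈ RPos N,
    IntegrableOn (fun t => K w t * f (s * t) * (prodCoord t)⁻¹) (RPos N)

/-- Condition `(K_w.1)` with absolute constant `A`: each `K_w` is measurable and
integrable w.r.t. `⟨t⟩⁻¹ dt`, with `∫ |K_w| dμ ≤ A` and `∫ K_w dμ = 1`. -/
def KernelCond1 {N : ℕ} (K : ℝ → (Fin N → ℝ) → ℝ) (A : ℝ) : Prop :=
  ∀ w > (0 : ℝ), Measurable (K w) ∧
    IntegrableOn (fun t => K w t * (prodCoord t)⁻¹) (RPos N) ∧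
    (∫ t in RPos N, |K w t| * (prodCoord t)⁻¹) ≤ A ∧
    (∫ t in RPos N, K w t * (prodCoord t)⁻¹) = 1

/-- Condition `(K_w.2)`: for every `δ ∈ (0,1)`,
`∫_{|1-t|>δ} |K_w(t)| ⟨t⟩⁻¹ dt → 0` as `w → +∞`. -/
def KernelCond2 {N : ℕ} (K : ℝ → (Fin N → ℝ) → ℝ) : Prop :=
  ∀ δ : ℝ, 0 < δ → δ < 1 →
    Tendsto (fun w => ∫ t in {t ∈ RPos N | δ < distOne t}, |K w t| * (prodCoord t)⁻¹)
      atTop (nhds 0)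

/-- The `φ`-modulus of smoothness `ω^φ(f, δ) := sup_{|1-t| ≤ δ} V^φ[τ_t f - f]`. -/
def modSmooth {N : ℕ} (φ : ℝ → ℝ) (f : (Fin N → ℝ) → ℝ) (δ : ℝ) : ℝ≥0∞ :=
  ⨆ (t : Fin N → ℝ) (_ : t ∈ RPos N) (_ : distOne t ≤ δ),
    totalVar φ (fun s => f (s * t) - f s)

/-- `f` is locally `φ`-absolutely continuous on `ℝ^N_+` (uniformly, in the sense of
Tonelli) with constant `l`. -/
def LocACphiWith {N : ℕ} (φ : ℝ → ℝ) (f : (Fin N → ℝ) → ℝ) (l : ℝ) : Prop :=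
  ∀ a b : Fin N → ℝ, (∀ i, 0 < a i) → (∀ i, a i ≤ b i) → ∀ j : Fin N,
    ∀ ε > (0 : ℝ), ∃ δ > (0 : ℝ),
      ∀ᵐ x' ∂(volume.restrict
          (Set.pi Set.univ (fun i : {i : Fin N // i ≠ j} => Set.Icc (a i.1) (b i.1)))),
        ∀ n : ℕ, ∀ α β : Fin n → ℝ,
          (∀ i, a j ≤ α i ∧ α i ≤ β i ∧ β i ≤ b j) →
          (Pairwise fun i i' =>
            Disjoint (Set.Ioo (α i) (β i)) (Set.Ioo (α i') (β i'))) →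
          (∑ i, φ (β i - α i)) < δ →
          (∑ i, φ (l * |f (insertCoord j x' (β i)) - f (insertCoord j x' (α i))|)) < ε

/-- `f ∈ AC^φ(ℝ^N_+)`: `f` is measurable, of bounded `φ`-variation and locally
`φ`-absolutely continuous on `ℝ^N_+`. -/
def MemACphi {N : ℕ} (φ : ℝ → ℝ) (f : (Fin N → ℝ) → ℝ) : Prop :=
  MemBVphi φ f ∧ ∃ l > (0 : ℝ), LocACphiWith φ f l

/-- `{K_w}` is an `α`-singular kernel: for every `δ ∈ (0,1)`,
`∫_{|1-t|>δ} |K_w(t)| ⟨t⟩⁻¹ dt = O(w^{-α})` as `w → +∞`. -/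
def AlphaSingular {N : ℕ} (K : ℝ → (Fin N → ℝ) → ℝ) (α : ℝ) : Prop :=
  ∀ δ : ℝ, 0 < δ → δ < 1 →
    (fun w => ∫ t in {t ∈ RPos N | δ < distOne t}, |K w t| * (prodCoord t)⁻¹)
      =O[atTop] fun w : ℝ => w ^ (-α)

/-- The Lipschitz class `V^φ Lip_N(α)`: `f ∈ BV^φ(ℝ^N_+)` such that, for some `μ > 0`,
`V^φ[μ(τ_t f - f)] = O(|log t|^α)` as `|1 - t| → 0`. -/
def MemLipAlpha {N : ℕ} (φ : ℝ → ℝ) (α : ℝ) (f : (Fin N → ℝ) → ℝ) : Prop :=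
  MemBVphi φ f ∧ ∃ μ > (0 : ℝ), ∃ C > (0 : ℝ), ∃ η > (0 : ℝ),
    ∀ t ∈ RPos N, distOne t ≤ η →
      totalVar φ (fun x => μ * (f (x * t) - f x)) ≤ ENNReal.ofReal (C * logNorm t ^ α)

/-!
The substitution `u = t^w` maps `ℝ^N_+` onto itself and turns `w^N ⟨t⟩⁻¹ dt` into `⟨u⟩⁻¹ du`,
while `|log t^w| = w |log t|`. If `|1 - t| > δ` then some `|1 - tᵢ| > δ/√N`, so
`|log t| ≥ c := log (1 + δ/√N)`, and Markov's inequality bounds the integral of `|K_w|`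
over `{|1 - t| > δ}` by `(c w)^{-α} m(K, α)`.
-/

lemma measurableSet_RPos (N : ℕ) : MeasurableSet (RPos N) := by
  have : RPos N = Set.pi Set.univ (fun _ : Fin N => Set.Ioi (0 : ℝ)) := by
    ext x; simp [RPos, Set.mem_pi]
  exact this ▸ MeasurableSet.univ_pi fun _ => measurableSet_Ioi

lemma prodCoord_pos {N : ℕ} {t : Fin N → ℝ} (ht : t ∈ RPos N) : 0 < prodCoord t :=
  Finset.prod_pos fun i _ => ht i

section ChangeOfVariables

variable {N : ℕ} {w : ℝ}

lemma det_pi_smul_proj (c : Fin N → ℝ) :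
    (ContinuousLinearMap.pi fun i => c i • ContinuousLinearMap.proj (R := ℝ)
      (φ := fun _ : Fin N => ℝ) i).det = ∏ i, c i := by
  have : ((ContinuousLinearMap.pi fun i => c i • ContinuousLinearMap.proj (R := ℝ)
      (φ := fun _ : Fin N => ℝ) i) : (Fin N → ℝ) →ₗ[ℝ] (Fin N → ℝ)) =
      Matrix.toLin' (Matrix.diagonal c) := by
    ext v i
    simp [Matrix.toLin'_apply, Matrix.mulVec_diagonal]
  rw [ContinuousLinearMap.det, this, LinearMap.det_toLin', Matrix.det_diagonal]

lemma hasFDerivAt_powVec {x : Fin N → ℝ} (hx : x ∈ RPos N) :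
    HasFDerivAt (fun t => powVec t w)
      (ContinuousLinearMap.pi fun i => (w * x i ^ (w - 1)) • ContinuousLinearMap.proj (R := ℝ)
        (φ := fun _ : Fin N => ℝ) i) x := by
  refine hasFDerivAt_pi.mpr fun i => ?_
  exact (Real.hasStrictDerivAt_rpow_const (Or.inl (hx i).ne')).hasDerivAt.comp_hasFDerivAt x
    (hasFDerivAt_apply i x : HasFDerivAt (fun t : Fin N → ℝ => t i)
      (ContinuousLinearMap.proj (R := ℝ) (φ := fun _ : Fin N => ℝ) i) x)

lemma injOn_powVec (hw : w ≠ 0) : Set.InjOn (fun t => powVec t w) (RPos N) := by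
  intro a ha b hb h
  funext i
  rw [← Real.rpow_rpow_inv (ha i).le hw, ← Real.rpow_rpow_inv (hb i).le hw]
  exact congrArg (· ^ w⁻¹) (congrFun h i)

lemma image_powVec_RPos (hw : w ≠ 0) : (fun t => powVec t w) '' RPos N = RPos N := by
  ext u
  constructor
  · rintro ⟨t, ht, rfl⟩ i
    exact Real.rpow_pos_of_pos (ht i) w
  · intro hu
    refine ⟨powVec u w⁻¹, fun i => Real.rpow_pos_of_pos (hu i) _, ?_⟩
    funext i
    exact Real.rpow_inv_rpow (hu i).le hw

lemma eqOn_abs_det_powVec_smul (hw : 0 < w) (h : (Fin N → ℝ) → ℝ) :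
    Set.EqOn (fun t => |∏ i, w * t i ^ (w - 1)| • (h (powVec t w) * (prodCoord (powVec t w))⁻¹))
      (fun t => w ^ N * h (powVec t w) * (prodCoord t)⁻¹) (RPos N) := by
  intro t ht
  have hpow : 0 < ∏ i, t i ^ w := Finset.prod_pos fun i _ => Real.rpow_pos_of_pos (ht i) w
  have hprod : 0 < ∏ i, t i := prodCoord_pos ht
  dsimp only
  rw [abs_of_pos (Finset.prod_pos fun i _ => mul_pos hw (Real.rpow_pos_of_pos (ht i) _)),
    Finset.prod_mul_distrib, Finset.prod_const, Finset.card_univ, Fintype.card_fin]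
  simp only [smul_eq_mul, prodCoord, powVec, Real.rpow_sub (ht _), Real.rpow_one,
    Finset.prod_div_distrib]
  field_simp

lemma integrableOn_powVec_iff (hw : 0 < w) (h : (Fin N → ℝ) → ℝ) :
    IntegrableOn (fun t => w ^ N * h (powVec t w) * (prodCoord t)⁻¹) (RPos N) ↔
      IntegrableOn (fun u => h u * (prodCoord u)⁻¹) (RPos N) := by
  have key := integrableOn_image_iff_integrableOn_abs_det_fderiv_smul volume
    (measurableSet_RPos N) (fun x hx => (hasFDerivAt_powVec (w := w) hx).hasFDerivWithinAt)
    (injOn_powVec hw.ne') (fun u => h u * (prodCoord u)⁻¹)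
  simp only [image_powVec_RPos hw.ne', det_pi_smul_proj] at key
  rw [key]
  exact integrableOn_congr_fun (eqOn_abs_det_powVec_smul hw h).symm (measurableSet_RPos N)

lemma setIntegral_powVec (hw : 0 < w) (h : (Fin N → ℝ) → ℝ) :
    ∫ t in RPos N, w ^ N * h (powVec t w) * (prodCoord t)⁻¹ =
      ∫ u in RPos N, h u * (prodCoord u)⁻¹ := by
  have key := integral_image_eq_integral_abs_det_fderiv_smul volume
    (measurableSet_RPos N) (fun x hx => (hasFDerivAt_powVec (w := w) hx).hasFDerivWithinAt)
    (injOn_powVec hw.ne') (fun u => h u * (prodCoord u)⁻¹)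
  simp only [image_powVec_RPos hw.ne', det_pi_smul_proj] at key
  rw [key]
  exact setIntegral_congr_fun (measurableSet_RPos N) (eqOn_abs_det_powVec_smul hw h).symm

end ChangeOfVariables

lemma logNorm_powVec {N : ℕ} {t : Fin N → ℝ} (ht : t ∈ RPos N) {w : ℝ} (hw : 0 ≤ w) :
    logNorm (powVec t w) = w * logNorm t := by
  have : ∑ i, Real.log (t i ^ w) ^ 2 = w ^ 2 * ∑ i, Real.log (t i) ^ 2 := by
    rw [Finset.mul_sum]
    exact Finset.sum_congr rfl fun i _ => by rw [Real.log_rpow (ht i)]; ring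
  unfold logNorm powVec
  rw [this, Real.sqrt_mul (sq_nonneg w), Real.sqrt_sq hw]

lemma abs_log_le_logNorm {N : ℕ} (t : Fin N → ℝ) (i : Fin N) : |Real.log (t i)| ≤ logNorm t := by
  rw [logNorm, ← Real.sqrt_sq_eq_abs]
  exact Real.sqrt_le_sqrt <| Finset.single_le_sum (f := fun j => Real.log (t j) ^ 2)
    (fun j _ => sq_nonneg _) (Finset.mem_univ i)

lemma log_one_add_le_abs_log {x d : ℝ} (hx : 0 < x) (hd : 0 ≤ d) (hdx : d < |1 - x|) :
    Real.log (1 + d) ≤ |Real.log x| := by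
  rcases lt_abs.mp hdx with h | h
  · have hlog : Real.log x < 0 := Real.log_neg hx (by linarith)
    have : 1 + d ≤ x⁻¹ := by
      rw [le_inv_comm₀ (by linarith) hx, inv_eq_one_div, le_div_iff₀ (by linarith)]
      nlinarith
    rw [abs_of_neg hlog, ← Real.log_inv]
    exact Real.log_le_log (by linarith) this
  · exact (Real.log_le_log (by linarith) (by linarith)).trans (le_abs_self _)

lemma exists_lt_abs_one_sub_of_lt_distOne {N : ℕ} {t : Fin N → ℝ} {δ : ℝ} (hδ : 0 ≤ δ)
    (ht : δ < distOne t) : ∃ i, δ / Real.sqrt N < |1 - t i| := by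
  by_contra! hle
  have hsum : ∑ i, (1 - t i) ^ 2 ≤ ∑ _i : Fin N, (δ / Real.sqrt N) ^ 2 :=
    Finset.sum_le_sum fun i _ => sq_abs (1 - t i) ▸ pow_le_pow_left₀ (abs_nonneg _) (hle i) 2
  have hNδ : (N : ℝ) * (δ / Real.sqrt N) ^ 2 ≤ δ ^ 2 := by
    rw [div_pow, Real.sq_sqrt (Nat.cast_nonneg N)]
    rcases eq_or_ne (N : ℝ) 0 with hN | hN
    · simpa [hN] using sq_nonneg δ
    · rw [mul_div_cancel₀ _ hN]
  have : distOne t ≤ δ := by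
    rw [distOne, ← Real.sqrt_sq hδ]
    refine Real.sqrt_le_sqrt (hsum.trans ?_)
    simpa using hNδ
  linarith

lemma log_one_add_div_sqrt_le_logNorm {N : ℕ} {t : Fin N → ℝ} (ht : t ∈ RPos N) {δ : ℝ}
    (hδ : 0 ≤ δ) (hδt : δ < distOne t) : Real.log (1 + δ / Real.sqrt N) ≤ logNorm t := by
  obtain ⟨i, hi⟩ := exists_lt_abs_one_sub_of_lt_distOne hδ hδt
  exact (log_one_add_le_abs_log (ht i) (by positivity) hi).trans (abs_log_le_logNorm t i)

lemma one_le_rpow_neg_mul_rpow {a b α : ℝ} (ha : 0 < a) (hab : a ≤ b) (hα : 0 ≤ α) :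
    1 ≤ a ^ (-α) * b ^ α := by
  rw [Real.rpow_neg ha.le, inv_mul_eq_div, ← Real.div_rpow (ha.le.trans hab) ha.le]
  exact Real.one_le_rpow ((one_le_div ha).mpr hab) hα

lemma logNorm_nonneg {N : ℕ} (t : Fin N → ℝ) : 0 ≤ logNorm t := Real.sqrt_nonneg _

lemma continuous_distOne {N : ℕ} : Continuous (distOne (N := N)) := by
  unfold distOne
  fun_prop

lemma setIntegral_abs_fejerKernel_le {N : ℕ} {K : (Fin N → ℝ) → ℝ} {α c w : ℝ} (hα : 0 ≤ α)
    (hc : 0 < c) (hw : 0 < w)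
    (hmom : IntegrableOn (fun t => logNorm t ^ α * |K t| * (prodCoord t)⁻¹) (RPos N))
    {A : Set (Fin N → ℝ)} (hA : MeasurableSet A) (hAR : A ⊆ RPos N)
    (hcA : ∀ t ∈ A, c ≤ logNorm t) :
    ∫ t in A, |w ^ N * K (powVec t w)| * (prodCoord t)⁻¹ ≤
      (c * w) ^ (-α) * ∫ u in RPos N, logNorm u ^ α * |K u| * (prodCoord u)⁻¹ := by
  set G : (Fin N → ℝ) → ℝ := fun t =>
    w ^ N * (logNorm (powVec t w) ^ α * |K (powVec t w)|) * (prodCoord t)⁻¹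
  have hG : IntegrableOn G (RPos N) := (integrableOn_powVec_iff hw _).mpr hmom
  have hG0 : ∀ t ∈ RPos N, 0 ≤ G t := fun t ht => by
    have := prodCoord_pos ht
    have := logNorm_nonneg (powVec t w)
    positivity
  have hpt : ∀ t ∈ A, |w ^ N * K (powVec t w)| * (prodCoord t)⁻¹ ≤ (c * w) ^ (-α) * G t := by
    intro t ht
    have hlog : c * w ≤ logNorm (powVec t w) := by
      rw [logNorm_powVec (hAR ht) hw.le, mul_comm]
      exact mul_le_mul_of_nonneg_left (hcA t ht) hw.le
    have hone := one_le_rpow_neg_mul_rpow (mul_pos hc hw) hlog hα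
    have := prodCoord_pos (hAR ht)
    calc |w ^ N * K (powVec t w)| * (prodCoord t)⁻¹
        = w ^ N * |K (powVec t w)| * (prodCoord t)⁻¹ := by
          rw [abs_mul, abs_of_pos (pow_pos hw N)]
      _ ≤ ((c * w) ^ (-α) * logNorm (powVec t w) ^ α) *
          (w ^ N * |K (powVec t w)| * (prodCoord t)⁻¹) :=
          le_mul_of_one_le_left (by positivity) hone
      _ = (c * w) ^ (-α) * G t := by ring
  calc ∫ t in A, |w ^ N * K (powVec t w)| * (prodCoord t)⁻¹
      ≤ ∫ t in A, (c * w) ^ (-α) * G t :=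
        integral_mono_of_nonneg (ae_restrict_of_forall_mem hA fun t ht =>
            mul_nonneg (abs_nonneg _) (inv_nonneg.mpr (prodCoord_pos (hAR ht)).le))
          ((hG.mono_set hAR).const_mul _) (ae_restrict_of_forall_mem hA hpt)
    _ ≤ ∫ t in RPos N, (c * w) ^ (-α) * G t :=
        setIntegral_mono_set (hG.const_mul _)
          (ae_restrict_of_forall_mem (measurableSet_RPos N) fun t ht =>
            mul_nonneg (by positivity) (hG0 t ht))
          hAR.eventuallyLE
    _ = (c * w) ^ (-α) * ∫ u in RPos N, logNorm u ^ α * |K u| * (prodCoord u)⁻¹ := by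
        rw [integral_const_mul]
        exact congrArg _ (setIntegral_powVec hw fun u => logNorm u ^ α * |K u|)

theorem statement7_general {N : ℕ} (hN : 1 ≤ N) (K : (Fin N → ℝ) → ℝ)
    (α : ℝ) (hα : 0 < α)
    (hmom : IntegrableOn (fun t => logNorm t ^ α * |K t| * (prodCoord t)⁻¹) (RPos N)) :
    ∀ δ : ℝ, 0 < δ → δ < 1 →
      ∃ C > (0 : ℝ), ∃ w₀ > (0 : ℝ), ∀ w ≥ w₀,
        (∫ t in {t ∈ RPos N | δ < distOne t},
            |w ^ N * K (powVec t w)| * (prodCoord t)⁻¹) ≤ C * w ^ (-α) := by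
  intro δ hδ _
  have hsqrtN : 0 < Real.sqrt N := Real.sqrt_pos.mpr (by exact_mod_cast hN)
  set c := Real.log (1 + δ / Real.sqrt N)
  have hc : 0 < c := Real.log_pos (lt_add_of_pos_right 1 (div_pos hδ hsqrtN))
  set M := ∫ u in RPos N, logNorm u ^ α * |K u| * (prodCoord u)⁻¹
  have hM : 0 ≤ M := setIntegral_nonneg (measurableSet_RPos N) fun u hu => by
    have := prodCoord_pos hu
    have := logNorm_nonneg u
    positivity
  refine ⟨c ^ (-α) * (M + 1), by positivity, 1, one_pos, fun w hw => ?_⟩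
  have hw0 : 0 < w := one_pos.trans_le hw
  calc _ ≤ (c * w) ^ (-α) * M :=
        setIntegral_abs_fejerKernel_le hα.le hc hw0 hmom
          ((measurableSet_RPos N).inter (measurableSet_lt measurable_const
            continuous_distOne.measurable))
          (fun t ht => ht.1) fun t ht => log_one_add_div_sqrt_le_logNorm ht.1 hδ.le ht.2
    _ = c ^ (-α) * M * w ^ (-α) := by rw [Real.mul_rpow hc.le hw0.le]; ring
    _ ≤ c ^ (-α) * (M + 1) * w ^ (-α) := by gcongr; linarith

/-- Fejér-type kernels `K_w(t) = w^N K(t^w)` with finite absolute moment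
`m(K,α)` satisfy `∫_{|1−t|>δ} |K_w(t)| ⟨t⟩⁻¹ dt = O(w^{−α})` for every `δ ∈ (0,1)`. -/
theorem statement7 {N : ℕ} (hN : 1 ≤ N) (K : (Fin N → ℝ) → ℝ) (hmeas : Measurable K)
    (hint : IntegrableOn (fun t => K t * (prodCoord t)⁻¹) (RPos N))
    (hone : (∫ t in RPos N, K t * (prodCoord t)⁻¹) = 1)
    (α : ℝ) (hα : 0 < α)
    (hmom : IntegrableOn (fun t => logNorm t ^ α * |K t| * (prodCoord t)⁻¹) (RPos N)) :
    ∀ δ : ℝ, 0 < δ → δ < 1 →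
      ∃ C > (0 : ℝ), ∃ w₀ > (0 : ℝ), ∀ w ≥ w₀,
        (∫ t in {t ∈ RPos N | δ < distOne t},
            |w ^ N * K (powVec t w)| * (prodCoord t)⁻¹) ≤ C * w ^ (-α) :=
  statement7_general hN K α hα hmom

end
end

section
/- Let N = 1, let f : (0,∞) → ℝ be defined by f(x) = 0 for 0 < x < 1 and f(x) = 1 for x ≥ 1, let G_w(t) := (w/√π) e^{−w² (log t)²}, and let (T_w f)(s) := ∫_0^∞ G_w(t) f(st) t^{−1} dt. Then for every fixed w > 0, (T_w f)(s) → 0 as s → 0+ and (T_w f)(s) → 1/2 as s → 1−. -/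
open MeasureTheory Filter Set
open scoped ENNReal Topology

noncomputable section

/-- The one-dimensional Mellin operator `(T f)(s) := ∫₀^∞ K(t) f(st) t⁻¹ dt`. -/
def mellinOp1 (K : ℝ → ℝ) (f : ℝ → ℝ) (s : ℝ) : ℝ :=
  ∫ t in Set.Ioi (0 : ℝ), K t * f (s * t) * t⁻¹

/-- The Mellin Gauss–Weierstrass kernel `G_w(t) = (w/√π) e^{−w² log² t}`. -/
def gaussKernel (w t : ℝ) : ℝ :=
  (w / Real.sqrt Real.pi) * Real.exp (-(w ^ 2) * Real.log t ^ 2)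

/-- for `f = χ_{[1,∞)}` on `(0,∞)` and the Mellin Gauss–Weierstrass
kernels, for every fixed `w > 0`, `(T_w f)(s) → 0` as `s → 0⁺` and
`(T_w f)(s) → 1/2` as `s → 1⁻`. -/
theorem statement11 (f : ℝ → ℝ) (hf0 : ∀ x, 0 < x → x < 1 → f x = 0)
    (hf1 : ∀ x, 1 ≤ x → f x = 1) :
    ∀ w > (0 : ℝ),
      Tendsto (fun s => mellinOp1 (gaussKernel w) f s)
        (nhdsWithin 0 (Set.Ioi 0)) (nhds 0) ∧
      Tendsto (fun s => mellinOp1 (gaussKernel w) f s)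
        (nhdsWithin 1 (Set.Iio 1)) (nhds (1 / 2)) := by
  intro w hw
  have hb : (0 : ℝ) < w ^ 2 := by positivity
  set c : ℝ := w / Real.sqrt Real.pi with hc
  set g : ℝ → ℝ := fun x => c * Real.exp (-(w ^ 2) * x ^ 2) with hg
  have hgint : Integrable g := (integrable_exp_neg_mul_sq hb).const_mul c
  -- Key identity: for `s > 0`, the Mellin transform equals a Gaussian tail integral.
  have key : ∀ s : ℝ, 0 < s →
      mellinOp1 (gaussKernel w) f s = ∫ x in Ioi (-Real.log s), g x := by
    intro s hs
    have hs' : (0 : ℝ) < s⁻¹ := inv_pos.mpr hs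
    have heq : ∀ t ∈ Ioi (0 : ℝ),
        gaussKernel w t * f (s * t) * t⁻¹
          = Set.indicator (Ici s⁻¹) (fun t => gaussKernel w t * t⁻¹) t := by
      intro t ht
      rcases le_or_gt s⁻¹ t with h | h
      · rw [Set.indicator_of_mem (mem_Ici.mpr h)]
        have h1 : (1 : ℝ) ≤ s * t := by
          rw [← mul_inv_cancel₀ hs.ne']
          exact mul_le_mul_of_nonneg_left h hs.le
        rw [hf1 _ h1]; ring
      · rw [Set.indicator_of_notMem (by simpa using not_le.mpr h)]
        have h1 : 0 < s * t := mul_pos hs ht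
        have h2 : s * t < 1 := by
          calc s * t < s * s⁻¹ := mul_lt_mul_of_pos_left h hs
            _ = 1 := mul_inv_cancel₀ hs.ne'
        rw [hf0 _ h1 h2]; ring
    have step1 : mellinOp1 (gaussKernel w) f s
        = ∫ t in Ioi s⁻¹, gaussKernel w t * t⁻¹ := by
      rw [mellinOp1, setIntegral_congr_fun measurableSet_Ioi heq,
        setIntegral_indicator measurableSet_Ici,
        show Ioi (0:ℝ) ∩ Ici s⁻¹ = Ici s⁻¹ from
          Set.inter_eq_right.mpr (fun x hx => lt_of_lt_of_le hs' hx),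
        integral_Ici_eq_integral_Ioi]
    have himg : Real.exp '' Ioi (-Real.log s) = Ioi s⁻¹ := by
      have hsa : s⁻¹ = Real.exp (-Real.log s) := by
        rw [Real.exp_neg, Real.exp_log hs]
      rw [hsa]
      ext x
      constructor
      · rintro ⟨y, hy, rfl⟩
        exact Real.exp_lt_exp.mpr hy
      · intro hx
        have hx0 : 0 < x := lt_trans (Real.exp_pos _) hx
        refine ⟨Real.log x, ?_, Real.exp_log hx0⟩
        rw [mem_Ioi, ← Real.log_exp (-Real.log s)]
        exact Real.log_lt_log (Real.exp_pos _) hx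
    have step2 : (∫ t in Ioi s⁻¹, gaussKernel w t * t⁻¹)
        = ∫ x in Ioi (-Real.log s), g x := by
      rw [← himg,
        integral_image_eq_integral_abs_deriv_smul measurableSet_Ioi
          (fun x _ => (Real.hasDerivAt_exp x).hasDerivWithinAt)
          Real.exp_injective.injOn (fun t => gaussKernel w t * t⁻¹)]
      refine setIntegral_congr_fun measurableSet_Ioi fun x _ => ?_
      have hK : gaussKernel w (Real.exp x) = g x := by
        simp [gaussKernel, hg, hc, Real.log_exp]
      rw [abs_of_pos (Real.exp_pos x), smul_eq_mul, mul_comm, mul_assoc,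
        inv_mul_cancel₀ (Real.exp_ne_zero x), mul_one, hK]
    rw [step1, step2]
  -- The Gaussian tail integral tends to `0` at `+∞`.
  have hFtop : Tendsto (fun a : ℝ => ∫ x in Ioi a, g x) atTop (𝓝 0) := by
    have hI : (⋂ a : ℝ, Ioi a) = (∅ : Set ℝ) := by
      rw [Set.eq_empty_iff_forall_notMem]
      intro x hx
      exact lt_irrefl x ((Set.mem_iInter.mp hx) x)
    have := tendsto_setIntegral_of_antitone (f := g) (μ := volume)
      (s := fun a : ℝ => Ioi a) (fun _ => measurableSet_Ioi)
      (fun a b hab => Ioi_subset_Ioi hab) ⟨0, hgint.integrableOn⟩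
    rw [hI] at this
    simpa using this
  -- Continuity of the tail from the right at `0`.
  have hval : (∫ x in Ioi (0 : ℝ), g x) = 1 / 2 := by
    have h0 : (∫ x in Ioi (0 : ℝ), g x)
        = c * ∫ x in Ioi (0 : ℝ), Real.exp (-(w ^ 2) * x ^ 2) := by
      rw [hg, integral_const_mul]
    rw [h0, integral_gaussian_Ioi]
    have h1 : Real.sqrt (Real.pi / w ^ 2) = Real.sqrt Real.pi / w := by
      rw [Real.sqrt_div Real.pi_pos.le, Real.sqrt_sq hw.le]
    have hπ : Real.sqrt Real.pi ≠ 0 := ne_of_gt (Real.sqrt_pos.mpr Real.pi_pos)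
    rw [h1, hc]
    field_simp
  have hFcont : Tendsto (fun a : ℝ => ∫ x in Ioi a, g x) (𝓝[>] (0 : ℝ))
      (𝓝 (∫ x in Ioi (0 : ℝ), g x)) := by
    have hprim : Continuous fun b : ℝ => ∫ x in (0 : ℝ)..b, g x :=
      intervalIntegral.continuous_primitive (fun _ _ => hgint.intervalIntegrable) 0
    have htend : Tendsto (fun a : ℝ =>
        (∫ x in Ioi (0 : ℝ), g x) - ∫ x in (0 : ℝ)..a, g x) (𝓝[>] (0 : ℝ))
        (𝓝 (∫ x in Ioi (0 : ℝ), g x)) := by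
      have h2 := (hprim.tendsto 0).mono_left (nhdsWithin_le_nhds (s := Ioi (0 : ℝ)))
      simpa using tendsto_const_nhds.sub h2
    refine htend.congr' ?_
    filter_upwards [self_mem_nhdsWithin] with a (ha : (0 : ℝ) < a)
    have hsplit : (∫ x in Ioc (0 : ℝ) a ∪ Ioi a, g x)
        = (∫ x in Ioc (0 : ℝ) a, g x) + ∫ x in Ioi a, g x :=
      setIntegral_union (Set.Ioc_disjoint_Ioi le_rfl) measurableSet_Ioi
        hgint.integrableOn hgint.integrableOn
    rw [Set.Ioc_union_Ioi_eq_Ioi ha.le] at hsplit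
    rw [intervalIntegral.integral_of_le ha.le, hsplit]
    ring
  constructor
  · -- limit as `s → 0⁺`
    have hlog : Tendsto (fun s : ℝ => -Real.log s) (𝓝[>] (0 : ℝ)) atTop :=
      tendsto_neg_atBot_atTop.comp Real.tendsto_log_nhdsGT_zero
    refine (hFtop.comp hlog).congr' ?_
    filter_upwards [self_mem_nhdsWithin] with s (hs : (0 : ℝ) < s)
    exact (key s hs).symm
  · -- limit as `s → 1⁻`
    have hlog1 : Tendsto (fun s : ℝ => -Real.log s) (𝓝[<] (1 : ℝ)) (𝓝[>] (0 : ℝ)) := by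
      rw [tendsto_nhdsWithin_iff]
      constructor
      · have h2 : Tendsto Real.log (𝓝 (1 : ℝ)) (𝓝 0) := by
          have := (Real.continuousAt_log one_ne_zero).tendsto
          rwa [Real.log_one] at this
        have := (h2.mono_left (nhdsWithin_le_nhds (s := Iio (1 : ℝ)))).neg
        simpa using this
      · filter_upwards [Ioo_mem_nhdsLT_of_mem
          (show (1 : ℝ) ∈ Ioc (0 : ℝ) 1 from ⟨one_pos, le_rfl⟩)] with s hs
        exact mem_Ioi.mpr (neg_pos.mpr (Real.log_neg hs.1 hs.2))
    have hmain := hFcont.comp hlog1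
    rw [hval] at hmain
    refine hmain.congr' ?_
    filter_upwards [Ioo_mem_nhdsLT_of_mem
      (show (1 : ℝ) ∈ Ioc (0 : ℝ) 1 from ⟨one_pos, le_rfl⟩)] with s hs
    exact (key s hs.1).symm

end
end

section
/- Let φ ∈ Φ, let N = 1, let f : (0,∞) → ℝ be defined by f(x) = 0 for 0 < x < 1 and f(x) = 1 for x ≥ 1, let G_w(t) := (w/√π) e^{−w² (log t)²}, and let (T_w f)(s) := ∫_0^∞ G_w(t) f(st) t^{−1} dt. Then for every μ > 0 and every w > 0, V^φ[μ(T_w f − f)] ≥ φ(μ/2) > 0; in particular, V^φ[μ(T_w f − f)] does not tend to 0 as w → +∞ for any μ > 0, even though f ∈ BV^φ((0,∞)). Hence the conclusion of the convergence theorem fails for functions of bounded φ-variation that are not φ-absolutely continuous. -/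
open MeasureTheory Filter Set
open scoped ENNReal

noncomputable section

/-- `V^φ[g]`, the `φ`-variation of `g` over the whole `(0,∞)`:
the sup of `V^φ_{[a,b]}[g]` over all `[a,b] ⊂ (0,∞)`. -/
def totalVar1 (φ : ℝ → ℝ) (g : ℝ → ℝ) : ℝ≥0∞ :=
  ⨆ (a : ℝ) (b : ℝ) (_ : 0 < a) (_ : a ≤ b), phiVar1 φ a b g

lemma ConvexOn.le_div_mul_of_map_zero {φ : ℝ → ℝ} (hφ : ConvexOn ℝ (Ici 0) φ) (h0 : φ 0 = 0)
    {d c : ℝ} (hd : 0 ≤ d) (hdc : d ≤ c) (hc : 0 < c) : φ d ≤ d / c * φ c := by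
  have h := hφ.2 (mem_Ici.2 le_rfl) (mem_Ici.2 hc.le)
    (sub_nonneg.2 ((div_le_one hc).2 hdc)) (div_nonneg hd hc.le) (sub_add_cancel 1 (d / c))
  simpa only [smul_eq_mul, mul_zero, zero_add, h0, div_mul_cancel₀ d hc.ne'] using h

namespace IsPhiFun

variable {φ : ℝ → ℝ}

lemma map_zero (hφ : IsPhiFun φ) : φ 0 = 0 := (hφ.2.2.1 0 le_rfl).2 rfl

lemma pos (hφ : IsPhiFun φ) {u : ℝ} (hu : 0 < u) : 0 < φ u :=
  (hφ.2.1 u hu.le).lt_of_ne' fun h => hu.ne' ((hφ.2.2.1 u hu.le).1 h)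

lemma le_div_mul (hφ : IsPhiFun φ) {d c : ℝ} (hd : 0 ≤ d) (hdc : d ≤ c) (hc : 0 < c) :
    φ d ≤ d / c * φ c :=
  hφ.1.le_div_mul_of_map_zero hφ.map_zero hd hdc hc

lemma monotoneOn (hφ : IsPhiFun φ) : MonotoneOn φ (Ici 0) := by
  intro d hd c _ hdc
  rcases (hd.trans hdc).eq_or_lt with hc | hc
  · rw [le_antisymm (hdc.trans hc.ge) hd, ← hc]
  · calc φ d ≤ d / c * φ c := hφ.le_div_mul hd hdc hc
      _ ≤ 1 * φ c := by gcongr; exacts [hφ.2.1 c hc.le, (div_le_one hc).2 hdc]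
      _ = φ c := one_mul _

end IsPhiFun

lemma Fin.sum_succ_sub_castSucc {M : Type*} [AddCommGroup M] {n : ℕ} (v : Fin (n + 1) → M) :
    ∑ i : Fin n, (v i.succ - v i.castSucc) = v (Fin.last n) - v 0 := by
  induction n with
  | zero => simp
  | succ n ih =>
    rw [Fin.sum_univ_castSucc]
    simp only [Fin.succ_castSucc]
    rw [ih (fun i => v i.castSucc)]
    simp only [Fin.castSucc_zero, Fin.succ_last]
    abel

section Variation

variable {φ : ℝ → ℝ} {g : ℝ → ℝ} {a b : ℝ}

lemma ofReal_le_phiVar1 (hab : a ≤ b) :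
    ENNReal.ofReal (φ |g b - g a|) ≤ phiVar1 φ a b g := by
  have hmono : Monotone ![a, b] := by
    intro i j hij
    fin_cases i <;> fin_cases j <;> simp_all
  refine le_iSup_of_le 1 (le_iSup_of_le ![a, b] (le_iSup_of_le hmono ?_))
  exact le_iSup_of_le rfl (le_iSup_of_le rfl (by simp))

lemma phiVar1_le_totalVar1 (ha : 0 < a) (hab : a ≤ b) : phiVar1 φ a b g ≤ totalVar1 φ g :=
  le_iSup_of_le a (le_iSup_of_le b (le_iSup_of_le ha (le_iSup_of_le hab le_rfl)))

/-- Convexity bounds each increment `d` of `g` by `(d / c) φ(c)`, and the increments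
telescope to `g b - g a ≤ c`. -/
lemma phiVar1_le_of_monotoneOn (hφ : IsPhiFun φ) (hg : MonotoneOn g (Icc a b)) {c : ℝ}
    (hc : 0 < c) (hgc : g b - g a ≤ c) : phiVar1 φ a b g ≤ ENNReal.ofReal (φ c) := by
  refine iSup_le fun n => iSup_le fun u => iSup_le fun hu => iSup_le fun hu0 =>
    iSup_le fun hulast => ?_
  have hmem : ∀ j, u j ∈ Icc a b := fun j =>
    ⟨hu0 ▸ hu (Fin.zero_le j), hulast ▸ hu (Fin.le_last j)⟩
  have hab : a ≤ b := (hmem 0).1.trans (hmem 0).2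
  set d : Fin n → ℝ := fun i => g (u i.succ) - g (u i.castSucc)
  have hd_nonneg : ∀ i, 0 ≤ d i := fun i =>
    sub_nonneg.2 (hg (hmem _) (hmem _) (hu (Fin.castSucc_le_succ i)))
  have hd_le : ∀ i, d i ≤ c := fun i => by
    have := hg (hmem i.succ) ⟨hab, le_rfl⟩ (hmem i.succ).2
    have := hg ⟨le_rfl, hab⟩ (hmem i.castSucc) (hmem i.castSucc).1
    simp only [d]
    linarith
  have hsum : ∑ i, d i = g b - g a := by
    rw [← hu0, ← hulast]
    exact Fin.sum_succ_sub_castSucc (g ∘ u)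
  calc ∑ i, ENNReal.ofReal (φ |d i|)
      ≤ ∑ i, ENNReal.ofReal (d i / c * φ c) := by
        gcongr with i
        rw [abs_of_nonneg (hd_nonneg i)]
        exact hφ.le_div_mul (hd_nonneg i) (hd_le i) hc
    _ = ENNReal.ofReal ((g b - g a) / c * φ c) := by
        rw [← ENNReal.ofReal_sum_of_nonneg fun i _ =>
          mul_nonneg (div_nonneg (hd_nonneg i) hc.le) (hφ.2.1 c hc.le),
          ← Finset.sum_mul, ← Finset.sum_div, hsum]
    _ ≤ ENNReal.ofReal (φ c) := by
        gcongr
        exact mul_le_of_le_one_left (hφ.2.1 c hc.le) ((div_le_one hc).2 hgc)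

end Variation

lemma gaussKernel_nonneg {w : ℝ} (hw : 0 ≤ w) (t : ℝ) : 0 ≤ gaussKernel w t := by
  unfold gaussKernel
  positivity

/-- The substitution `t = eˣ` turns this into half of the Gaussian integral. -/
lemma integral_Ioi_one_gaussKernel_mul_inv {w : ℝ} (hw : 0 < w) :
    ∫ t in Ioi 1, gaussKernel w t * t⁻¹ = 1 / 2 := by
  have h := integral_comp_log_Ioi
    (fun y => w / Real.sqrt Real.pi * Real.exp (-(w ^ 2) * y ^ 2)) one_pos
  simp only [Real.log_one, smul_eq_mul] at h
  calc ∫ t in Ioi 1, gaussKernel w t * t⁻¹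
      = ∫ y in Ioi 0, w / Real.sqrt Real.pi * Real.exp (-(w ^ 2) * y ^ 2) := by
        rw [← h]
        refine setIntegral_congr_fun measurableSet_Ioi fun t _ => ?_
        simp only [gaussKernel]
        ring
    _ = 1 / 2 := by
        rw [integral_const_mul, integral_gaussian_Ioi, Real.sqrt_div Real.pi_pos.le,
          Real.sqrt_sq hw.le]
        field_simp

lemma mellinOp1_nonneg {K f : ℝ → ℝ} (hK : ∀ t, 0 < t → 0 ≤ K t) (hf : ∀ x, 0 < x → 0 ≤ f x)
    {s : ℝ} (hs : 0 < s) : 0 ≤ mellinOp1 K f s :=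
  setIntegral_nonneg measurableSet_Ioi fun t (ht : 0 < t) =>
    mul_nonneg (mul_nonneg (hK t ht) (hf _ (mul_pos hs ht))) (inv_nonneg.2 ht.le)

section Heaviside

variable {f : ℝ → ℝ}

lemma mem_Icc_of_eq_zero_of_eq_one (hf0 : ∀ x, 0 < x → x < 1 → f x = 0)
    (hf1 : ∀ x, 1 ≤ x → f x = 1) {x : ℝ} (hx : 0 < x) : f x ∈ Icc 0 1 := by
  rcases lt_or_ge x 1 with h | h
  · simp [hf0 x hx h]
  · simp [hf1 x h]

lemma monotoneOn_of_eq_zero_of_eq_one (hf0 : ∀ x, 0 < x → x < 1 → f x = 0)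
    (hf1 : ∀ x, 1 ≤ x → f x = 1) : MonotoneOn f (Ioi 0) := by
  intro x hx y hy hxy
  rcases lt_or_ge x 1 with h | h
  · exact hf0 x hx h ▸ (mem_Icc_of_eq_zero_of_eq_one hf0 hf1 hy).1
  · rw [hf1 x h, hf1 y (h.trans hxy)]

lemma mellinOp1_gaussKernel_one (hf0 : ∀ x, 0 < x → x < 1 → f x = 0)
    (hf1 : ∀ x, 1 ≤ x → f x = 1) {w : ℝ} (hw : 0 < w) :
    mellinOp1 (gaussKernel w) f 1 = 1 / 2 := by
  have hind : EqOn (fun t => gaussKernel w t * f (1 * t) * t⁻¹)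
      ((Ici 1).indicator fun t => gaussKernel w t * t⁻¹) (Ioi 0) := by
    intro t (ht : 0 < t)
    rcases lt_or_ge t 1 with h | h
    · simp [hf0 t ht h, h]
    · simp [hf1 t h, h]
  rw [mellinOp1, setIntegral_congr_fun measurableSet_Ioi hind,
    setIntegral_indicator measurableSet_Ici,
    inter_eq_right.2 (Ici_subset_Ioi.2 zero_lt_one),
    integral_Ici_eq_integral_Ioi, integral_Ioi_one_gaussKernel_mul_inv hw]

/-- The jump of `f` at `1` survives smoothing: `T_w f (1) = 1/2` while `T_w f ≥ 0 = f`
on `(0, 1)`, so `T_w f - f` drops by at least `1/2` between `1/2` and `1`. -/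
lemma ofReal_le_totalVar1_mellinOp1_sub {φ : ℝ → ℝ} (hφ : IsPhiFun φ)
    (hf0 : ∀ x, 0 < x → x < 1 → f x = 0) (hf1 : ∀ x, 1 ≤ x → f x = 1)
    {μ w : ℝ} (hμ : 0 < μ) (hw : 0 < w) :
    ENNReal.ofReal (φ (μ / 2)) ≤
      totalVar1 φ (fun s => μ * (mellinOp1 (gaussKernel w) f s - f s)) := by
  set g := fun s => μ * (mellinOp1 (gaussKernel w) f s - f s)
  have hg1 : g 1 = -(μ / 2) := by
    simp only [g, mellinOp1_gaussKernel_one hf0 hf1 hw, hf1 1 le_rfl]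
    ring
  have hg_half : 0 ≤ g (1 / 2) := by
    simp only [g, hf0 (1 / 2) (by norm_num) (by norm_num), sub_zero]
    exact mul_nonneg hμ.le (mellinOp1_nonneg (fun t _ => gaussKernel_nonneg hw.le t)
      (fun x hx => (mem_Icc_of_eq_zero_of_eq_one hf0 hf1 hx).1) (by norm_num))
  have hjump : μ / 2 ≤ |g 1 - g (1 / 2)| := by
    rw [abs_of_nonpos (by linarith)]
    linarith
  calc ENNReal.ofReal (φ (μ / 2))
      ≤ ENNReal.ofReal (φ |g 1 - g (1 / 2)|) :=
        ENNReal.ofReal_le_ofReal (hφ.monotoneOn (by positivity : (0:ℝ) ≤ μ / 2)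
          (abs_nonneg (g 1 - g (1 / 2))) hjump)
    _ ≤ phiVar1 φ (1 / 2) 1 g := ofReal_le_phiVar1 (by norm_num)
    _ ≤ totalVar1 φ g := phiVar1_le_totalVar1 (by norm_num) (by norm_num)

lemma totalVar1_le_of_eq_zero_of_eq_one {φ : ℝ → ℝ} (hφ : IsPhiFun φ)
    (hf0 : ∀ x, 0 < x → x < 1 → f x = 0) (hf1 : ∀ x, 1 ≤ x → f x = 1) :
    totalVar1 φ f ≤ ENNReal.ofReal (φ 1) := by
  refine iSup_le fun a => iSup_le fun b => iSup_le fun ha => iSup_le fun hab => ?_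
  have hIcc : Icc a b ⊆ Ioi 0 := fun x hx => ha.trans_le hx.1
  refine phiVar1_le_of_monotoneOn hφ
    ((monotoneOn_of_eq_zero_of_eq_one hf0 hf1).mono hIcc) one_pos ?_
  linarith [(mem_Icc_of_eq_zero_of_eq_one hf0 hf1 (ha.trans_le hab)).2,
    (mem_Icc_of_eq_zero_of_eq_one hf0 hf1 ha).1]

end Heaviside

/-- for `f = χ_{[1,∞)}` on `(0,∞)` and the Mellin Gauss–Weierstrass
kernels, for every `μ > 0` and `w > 0` one has `V^φ[μ(T_w f − f)] ≥ φ(μ/2) > 0`; in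
particular `V^φ[μ(T_w f − f)]` does not tend to `0` as `w → +∞` for any `μ > 0`, even
though `f ∈ BV^φ((0,∞))`. -/
theorem statement12 (φ : ℝ → ℝ) (hφ : IsPhiFun φ)
    (f : ℝ → ℝ) (hf0 : ∀ x, 0 < x → x < 1 → f x = 0)
    (hf1 : ∀ x, 1 ≤ x → f x = 1) :
    (∀ μ > (0 : ℝ), ∀ w > (0 : ℝ),
      ENNReal.ofReal (φ (μ / 2)) ≤
        totalVar1 φ (fun s => μ * (mellinOp1 (gaussKernel w) f s - f s)) ∧
      0 < φ (μ / 2)) ∧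
    (∀ μ > (0 : ℝ),
      ¬ Tendsto (fun w => totalVar1 φ (fun s => μ * (mellinOp1 (gaussKernel w) f s - f s)))
          atTop (nhds 0)) ∧
    (∃ l > (0 : ℝ), totalVar1 φ (fun x => l * f x) < ⊤) := by
  have hlower := fun μ (hμ : 0 < μ) w (hw : 0 < w) =>
    ofReal_le_totalVar1_mellinOp1_sub hφ hf0 hf1 hμ hw
  refine ⟨fun μ hμ w hw => ⟨hlower μ hμ w hw, hφ.pos (half_pos hμ)⟩, fun μ hμ h => ?_,
    ⟨1, one_pos, ?_⟩⟩
  · obtain ⟨w, hlt, hw⟩ := ((h.eventually_lt_const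
      (ENNReal.ofReal_pos.2 (hφ.pos (half_pos hμ)))).and (eventually_gt_atTop 0)).exists
    exact (hlower μ hμ w hw).not_gt hlt
  · simp only [one_mul]
    exact (totalVar1_le_of_eq_zero_of_eq_one hφ hf0 hf1).trans_lt ENNReal.ofReal_lt_top
end
end
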